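/- For every bounded continuous section f of π, every y ∈ Y and all 0 < τ₁ < τ₂, there exists a constant C ≥ 0 such that the map t ↦ iQ_t f(y) − C t² is concave on (τ₁, τ₂); in other words, t ↦ iQ_t f(y) is locally semiconcave on (0, ∞). -/

import Mathlib

/-! For fixed `y` and `z`, `F(t, y, z) = A + b / t` with `A = max_j f_j(z)` and
`0 ≤ b = d(f(z), π⁻¹(y))² / 2 ≤ diam(f(Y))² / 2`, since `f(y) ∈ π⁻¹(y)`. As `b / t - C t²` is
concave on `(τ₁, ∞)` as soon as `b ≤ C τ₁³`, the choice `C = diam(f(Y))² / (2 τ₁³)` makes every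
`t ↦ F(t, y, z) - C t²` concave there, uniformly in `z`. The family is bounded below because `f`
is bounded, so its infimum `iQ_t f(y) - C t²` is concave as well. -/

open Metric Set Filter Topology MeasureTheory

/-- `F(t,y,z) = max_j f_j(z) + d(f(z), π⁻¹(y))² / (2t)`. -/
noncomputable def hlF {κ : ℕ} (Y : Set (EuclideanSpace ℝ (Fin κ)))
    (π : EuclideanSpace ℝ (Fin κ) → Y) (f : Y → EuclideanSpace ℝ (Fin κ))
    (t : ℝ) (y z : Y) : ℝ :=
  (⨆ j, f z j) + (Metric.infDist (f z) (π ⁻¹' {y}))^2 / (2*t)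

/-- The intrinsic Hopf–Lax semigroup `iQ_t f(y) = inf_{z ∈ Y} F(t,y,z)`. -/
noncomputable def iQ {κ : ℕ} (Y : Set (EuclideanSpace ℝ (Fin κ)))
    (π : EuclideanSpace ℝ (Fin κ) → Y) (f : Y → EuclideanSpace ℝ (Fin κ))
    (t : ℝ) (y : Y) : ℝ :=
  ⨅ z : Y, hlF Y π f t y z

/-- A minimizing sequence for `iQ_t f(y)`. -/
def IsMinSeq {κ : ℕ} (Y : Set (EuclideanSpace ℝ (Fin κ)))
    (π : EuclideanSpace ℝ (Fin κ) → Y) (f : Y → EuclideanSpace ℝ (Fin κ))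
    (t : ℝ) (y : Y) (u : ℕ → Y) : Prop :=
  Filter.Tendsto (fun n => hlF Y π f t y (u n)) Filter.atTop (nhds (iQ Y π f t y))

/-- `iD⁺f(y,t)`. -/
noncomputable def iDp {κ : ℕ} (Y : Set (EuclideanSpace ℝ (Fin κ)))
    (π : EuclideanSpace ℝ (Fin κ) → Y) (f : Y → EuclideanSpace ℝ (Fin κ))
    (y : Y) (t : ℝ) : ℝ :=
  sSup { a : ℝ | ∃ u : ℕ → Y, IsMinSeq Y π f t y u ∧
    a = Filter.limsup (fun n => Metric.infDist (f (u n)) (π ⁻¹' {y})) Filter.atTop }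

/-- `iD⁻f(y,t)`. -/
noncomputable def iDm {κ : ℕ} (Y : Set (EuclideanSpace ℝ (Fin κ)))
    (π : EuclideanSpace ℝ (Fin κ) → Y) (f : Y → EuclideanSpace ℝ (Fin κ))
    (y : Y) (t : ℝ) : ℝ :=
  sInf { a : ℝ | ∃ u : ℕ → Y, IsMinSeq Y π f t y u ∧
    a = Filter.liminf (fun n => Metric.infDist (f (u n)) (π ⁻¹' {y})) Filter.atTop }

theorem ConcaveOn.ciInf {ι E : Type*} [Nonempty ι] [AddCommMonoid E] [Module ℝ E] {s : Set E}
    {g : ι → E → ℝ} (hg : ∀ i, ConcaveOn ℝ s (g i))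
    (hbdd : ∀ x ∈ s, BddBelow (range fun i => g i x)) :
    ConcaveOn ℝ s (fun x => ⨅ i, g i x) := by
  refine ⟨(hg (Classical.arbitrary ι)).1, fun x hx x' hx' a b ha hb hab => le_ciInf fun i => ?_⟩
  calc a • (⨅ i, g i x) + b • (⨅ i, g i x')
      ≤ a • g i x + b • g i x' := by
        gcongr
        exacts [ciInf_le (hbdd x hx) i, ciInf_le (hbdd x' hx') i]
    _ ≤ g i (a • x + b • x') := (hg i).2 hx hx' ha hb hab

/-- The second derivative of `b / t - c * t ^ 2` is `2 * (b / t ^ 3 - c)`. -/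
theorem concaveOn_div_sub_mul_sq {τ b c : ℝ} (hτ : 0 < τ) (hb : 0 ≤ b) (hbc : b ≤ c * τ ^ 3) :
    ConcaveOn ℝ (Ioi τ) (fun t => b / t - c * t ^ 2) := by
  have hpos : ∀ t ∈ Ioi τ, 0 < t := fun t ht => hτ.trans ht
  refine concaveOn_of_hasDerivWithinAt2_nonpos (convex_Ioi τ)
    (f' := fun t => -b / t ^ 2 - 2 * c * t) (f'' := fun t => 2 * b / t ^ 3 - 2 * c)
    ?_ ?_ ?_ ?_
  · exact (continuousOn_const.div continuousOn_id fun t ht => (hpos t ht).ne').sub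
      (by fun_prop)
  · simp only [interior_Ioi]
    intro t ht
    have ht0 := (hpos t ht).ne'
    refine HasDerivAt.hasDerivWithinAt ?_
    convert ((hasDerivAt_inv ht0).const_mul b).sub ((hasDerivAt_pow 2 t).const_mul c) using 1
    · ext; simp [div_eq_mul_inv]
    · field_simp; ring
  · simp only [interior_Ioi]
    intro t ht
    have ht0 := (hpos t ht).ne'
    refine HasDerivAt.hasDerivWithinAt ?_
    convert (((hasDerivAt_pow 2 t).inv (pow_ne_zero 2 ht0)).const_mul (-b)).sub
      ((hasDerivAt_id t).const_mul (2 * c)) using 1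
    · ext; simp [div_eq_mul_inv]
    · field_simp; ring
  · simp only [interior_Ioi]
    intro t ht
    have ht3 : τ ^ 3 ≤ t ^ 3 := pow_le_pow_left₀ hτ.le (le_of_lt ht) 3
    have : b / t ^ 3 ≤ c := by
      rw [div_le_iff₀ (pow_pos (hpos t ht) 3)]
      nlinarith [pow_pos hτ 3]
    linarith [show 2 * b / t ^ 3 = 2 * (b / t ^ 3) by ring]

theorem neg_norm_le_iSup_apply {ι : Type*} [Fintype ι] (x : EuclideanSpace ℝ ι) :
    -‖x‖ ≤ ⨆ j, x j := by
  cases isEmpty_or_nonempty ι with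
  | inl _ => simp [Real.iSup_of_isEmpty]
  | inr _ =>
    obtain ⟨j⟩ := ‹Nonempty ι›
    calc -‖x‖ ≤ -‖x j‖ := neg_le_neg (PiLp.norm_apply_le x j)
      _ ≤ x j := neg_le_of_abs_le le_rfl
      _ ≤ ⨆ j, x j := le_ciSup (Set.finite_range _).bddAbove j

section HopfLax

variable {κ : ℕ} {Y : Set (EuclideanSpace ℝ (Fin κ))} {π : EuclideanSpace ℝ (Fin κ) → Y}
  {f : Y → EuclideanSpace ℝ (Fin κ)}

theorem infDist_fiber_le_diam (hfb : Bornology.IsBounded (range f))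
    (hsec : ∀ y : Y, π (f y) = y) (y z : Y) :
    infDist (f z) (π ⁻¹' {y}) ≤ diam (range f) :=
  (infDist_le_dist_of_mem (by simp [hsec y])).trans
    (dist_le_diam_of_mem hfb (mem_range_self z) (mem_range_self y))

theorem bddBelow_range_hlF (hfb : Bornology.IsBounded (range f)) {t : ℝ} (ht : 0 ≤ t) (y : Y) :
    BddBelow (range fun z => hlF Y π f t y z) := by
  obtain ⟨R, hR⟩ := hfb.exists_norm_le
  refine ⟨-R, forall_mem_range.2 fun z => ?_⟩
  have hsup := neg_norm_le_iSup_apply (f z)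
  have hR := hR _ (mem_range_self z)
  have : 0 ≤ infDist (f z) (π ⁻¹' {y}) ^ 2 / (2 * t) := by positivity
  simp only [hlF]
  linarith

theorem concaveOn_hlF_sub_mul_sq (hfb : Bornology.IsBounded (range f))
    (hsec : ∀ y : Y, π (f y) = y) {τ : ℝ} (hτ : 0 < τ) (y z : Y) :
    ConcaveOn ℝ (Ioi τ)
      (fun t => hlF Y π f t y z - diam (range f) ^ 2 / (2 * τ ^ 3) * t ^ 2) := by
  set d := infDist (f z) (π ⁻¹' {y})
  have hd : d ^ 2 ≤ diam (range f) ^ 2 :=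
    pow_le_pow_left₀ infDist_nonneg (infDist_fiber_le_diam hfb hsec y z) 2
  have hbc : d ^ 2 / 2 ≤ diam (range f) ^ 2 / (2 * τ ^ 3) * τ ^ 3 := by
    rw [div_mul_eq_mul_div, mul_div_mul_right _ _ (pow_pos hτ 3).ne']
    linarith
  refine ((concaveOn_div_sub_mul_sq hτ (by positivity) hbc).add_const (⨆ j, f z j)).congr
    fun t _ => ?_
  simp only [Pi.add_apply, hlF, d]
  ring

end HopfLax

theorem stmt_13_general (κ : ℕ)
    (Y : Set (EuclideanSpace ℝ (Fin κ)))
    (π : EuclideanSpace ℝ (Fin κ) → Y)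
    (f : Y → EuclideanSpace ℝ (Fin κ))
    (hfb : Bornology.IsBounded (Set.range f)) (hsec : ∀ y : Y, π (f y) = y)

    (y : Y) (τ₁ τ₂ : ℝ) (hτ₁ : 0 < τ₁) :
    ∃ C : ℝ, 0 ≤ C ∧
      ConcaveOn ℝ (Set.Ioo τ₁ τ₂) (fun t => iQ Y π f t y - C * t^2) := by
  have : Nonempty Y := ⟨y⟩
  set C := diam (range f) ^ 2 / (2 * τ₁ ^ 3)
  have hbdd : ∀ t ∈ Ioi τ₁, BddBelow (range fun z => hlF Y π f t y z) :=
    fun t ht => bddBelow_range_hlF hfb (hτ₁.trans ht).le y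
  have hconc : ConcaveOn ℝ (Ioi τ₁) (fun t => ⨅ z, (hlF Y π f t y z - C * t ^ 2)) :=
    ConcaveOn.ciInf (concaveOn_hlF_sub_mul_sq hfb hsec hτ₁ y) fun t ht =>
      (hbdd t ht).range_comp_left fun _ _ h => sub_le_sub_right h _
  refine ⟨C, by positivity, (hconc.subset Ioo_subset_Ioi_self (convex_Ioo _ _)).congr ?_⟩
  intro t ht
  exact (ciInf_sub (hbdd t (Ioo_subset_Ioi_self ht)) _).symm

theorem stmt_13 (κ : ℕ) (hκ : 1 ≤ κ)
    (Y : Set (EuclideanSpace ℝ (Fin κ))) (hY : Y.Nonempty) (hYb : Bornology.IsBounded Y)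
    (π : EuclideanSpace ℝ (Fin κ) → Y) (hπc : Continuous π) (hπo : IsOpenMap π)
    (hπs : Function.Surjective π)
    (f : Y → EuclideanSpace ℝ (Fin κ)) (hfc : Continuous f)
    (hfb : Bornology.IsBounded (Set.range f)) (hsec : ∀ y : Y, π (f y) = y)

    (y : Y) (τ₁ τ₂ : ℝ) (hτ₁ : 0 < τ₁) (hτ : τ₁ < τ₂) :
    ∃ C : ℝ, 0 ≤ C ∧
      ConcaveOn ℝ (Set.Ioo τ₁ τ₂) (fun t => iQ Y π f t y - C * t^2) :=
  stmt_13_general κ Y π f hfb hsec y τ₁ τ₂ hτ₁
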